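/- arXiv:2002.08576 — 2 statements merged into one kernel-verified Lean document; each statement's English description precedes it below -/
import Mathlib

section
/- If π is a tangent plane and π' is a secant plane, then the number of black points contained in π equals the number of black points contained in π' plus q. -/
open Submodule Set

/-- The points of `PG(3,q)`: the 1-dimensional subspaces of a 4-dimensional
vector space over the field `K` of order `q`. -/
def pgPoint (K : Type) [Field K] : Set (Submodule K (Fin 4 → K)) :=
  {W | Module.finrank K ↥W = 1}

/-- The lines of `PG(3,q)`: the 2-dimensional subspaces. -/
def pgLine (K : Type) [Field K] : Set (Submodule K (Fin 4 → K)) :=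
  {W | Module.finrank K ↥W = 2}

/-- The planes of `PG(3,q)`: the 3-dimensional subspaces. -/
def pgPlane (K : Type) [Field K] : Set (Submodule K (Fin 4 → K)) :=
  {W | Module.finrank K ↥W = 3}

/-- The lines of the family `S` passing through the point `p`. -/
def linesThru (K : Type) [Field K] (S : Set (Submodule K (Fin 4 → K)))
    (p : Submodule K (Fin 4 → K)) : Set (Submodule K (Fin 4 → K)) :=
  {l | l ∈ S ∧ p ≤ l}

/-- The lines of the family `S` contained in the plane `π` (the set `S_π`). -/
def linesIn (K : Type) [Field K] (S : Set (Submodule K (Fin 4 → K)))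
    (π : Submodule K (Fin 4 → K)) : Set (Submodule K (Fin 4 → K)) :=
  {l | l ∈ S ∧ l ≤ π}

/-- The lines of `S_π` belonging to the pencil of lines of the plane `π`
through the point `p`. -/
def pencilS (K : Type) [Field K] (S : Set (Submodule K (Fin 4 → K)))
    (p π : Submodule K (Fin 4 → K)) : Set (Submodule K (Fin 4 → K)) :=
  {l | l ∈ S ∧ p ≤ l ∧ l ≤ π}

/-- Property (P1): every point lies on exactly `q(q+1)/2` or exactly `q^2`
lines of `S`, and both numbers are attained. -/
def P1 (K : Type) [Field K] (S : Set (Submodule K (Fin 4 → K))) (q : ℕ) : Prop :=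
  (∀ p ∈ pgPoint K, (linesThru K S p).ncard = q * (q + 1) / 2 ∨
      (linesThru K S p).ncard = q ^ 2) ∧
  (∃ p ∈ pgPoint K, (linesThru K S p).ncard = q * (q + 1) / 2) ∧
  (∃ p ∈ pgPoint K, (linesThru K S p).ncard = q ^ 2)

/-- Property (P2): every plane contains exactly `q(q+1)/2` or exactly `q^2`
lines of `S`. -/
def P2 (K : Type) [Field K] (S : Set (Submodule K (Fin 4 → K))) (q : ℕ) : Prop :=
  ∀ π ∈ pgPlane K, (linesIn K S π).ncard = q * (q + 1) / 2 ∨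
    (linesIn K S π).ncard = q ^ 2

/-- Property (P2a): if a plane contains `q^2` lines of `S`, then every pencil of
lines in that plane contains `0` or `q` lines of `S`. -/
def P2a (K : Type) [Field K] (S : Set (Submodule K (Fin 4 → K))) (q : ℕ) : Prop :=
  ∀ π ∈ pgPlane K, (linesIn K S π).ncard = q ^ 2 →
    ∀ p ∈ pgPoint K, p ≤ π →
      (pencilS K S p π).ncard = 0 ∨ (pencilS K S p π).ncard = q

/-- Property (P2b): if a plane contains `q(q+1)/2` lines of `S`, then every
pencil of lines in that plane contains `(q-1)/2`, `(q+1)/2` or `q` lines of `S`. -/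
def P2b (K : Type) [Field K] (S : Set (Submodule K (Fin 4 → K))) (q : ℕ) : Prop :=
  ∀ π ∈ pgPlane K, (linesIn K S π).ncard = q * (q + 1) / 2 →
    ∀ p ∈ pgPoint K, p ≤ π →
      (pencilS K S p π).ncard = (q - 1) / 2 ∨
      (pencilS K S p π).ncard = (q + 1) / 2 ∨
      (pencilS K S p π).ncard = q

/-- A point is black if it lies on exactly `q^2` lines of `S`. -/
def IsBlack (K : Type) [Field K] (S : Set (Submodule K (Fin 4 → K))) (q : ℕ)
    (p : Submodule K (Fin 4 → K)) : Prop :=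
  p ∈ pgPoint K ∧ (linesThru K S p).ncard = q ^ 2

/-- A plane is tangent if it contains exactly `q^2` lines of `S`. -/
def IsTangent (K : Type) [Field K] (S : Set (Submodule K (Fin 4 → K))) (q : ℕ)
    (π : Submodule K (Fin 4 → K)) : Prop :=
  π ∈ pgPlane K ∧ (linesIn K S π).ncard = q ^ 2

/-- A plane is secant if it contains exactly `q(q+1)/2` lines of `S`. -/
def IsSecant (K : Type) [Field K] (S : Set (Submodule K (Fin 4 → K))) (q : ℕ)
    (π : Submodule K (Fin 4 → K)) : Prop :=
  π ∈ pgPlane K ∧ (linesIn K S π).ncard = q * (q + 1) / 2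

/-- For a secant plane `π`, the set `α(π)` of points of `π` lying on exactly
`(q-1)/2` lines of `S_π`. -/
def alphaSet (K : Type) [Field K] (S : Set (Submodule K (Fin 4 → K))) (q : ℕ)
    (π : Submodule K (Fin 4 → K)) : Set (Submodule K (Fin 4 → K)) :=
  {p | p ∈ pgPoint K ∧ p ≤ π ∧ (pencilS K S p π).ncard = (q - 1) / 2}

/-- For a secant plane `π`, the set `β(π)` of points of `π` lying on exactly
`(q+1)/2` lines of `S_π`. -/
def betaSet (K : Type) [Field K] (S : Set (Submodule K (Fin 4 → K))) (q : ℕ)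
    (π : Submodule K (Fin 4 → K)) : Set (Submodule K (Fin 4 → K)) :=
  {p | p ∈ pgPoint K ∧ p ≤ π ∧ (pencilS K S p π).ncard = (q + 1) / 2}

/-- For a secant plane `π`, the set `γ(π)` of points of `π` lying on exactly
`q` lines of `S_π`. -/
def gammaSet (K : Type) [Field K] (S : Set (Submodule K (Fin 4 → K))) (q : ℕ)
    (π : Submodule K (Fin 4 → K)) : Set (Submodule K (Fin 4 → K)) :=
  {p | p ∈ pgPoint K ∧ p ≤ π ∧ (pencilS K S p π).ncard = q}

/-!
Fix a plane `σ` and double count the pairs (point of `σ`, line of `S` through it). A line of `S`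
lying in `σ` has `q + 1` points there and any other line of `S` meets `σ` in exactly one point, so
the count is `|S| + q |S_σ|`. Counted by points instead, a black point contributes `q²` and every
other point `q(q+1)/2`. All planes have `q² + q + 1` points, so subtracting the two identities for a
tangent plane (`|S_σ| = q²`) and a secant plane (`|S_σ| = q(q+1)/2`) gives
`(b - b') (q² - q(q+1)/2) = q (q² - q(q+1)/2)` for the numbers `b`, `b'` of black points, and
`q² - q(q+1)/2 = q(q-1)/2 ≠ 0`.
-/

open Module Finset

section Counting

theorem ncard_eq_card_filter {α : Type*} [Fintype α] {s : Set α} {P : α → Prop}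
    [DecidablePred P] (h : ∀ x, x ∈ s ↔ P x) : s.ncard = #{x | P x} := by
  rw [← Set.ncard_coe_finset, coe_filter]
  congr 1
  ext x
  simp [h]

variable {K V : Type*} [Field K] [AddCommGroup V] [Module K V]

theorem ncard_finrank_eq_one_le [Finite K] (W : Submodule K V) :
    {p : Submodule K V | finrank K p = 1 ∧ p ≤ W}.ncard =
      ∑ i ∈ range (finrank K W), Nat.card K ^ i := by
  have hrange : {p : Submodule K V | finrank K p = 1 ∧ p ≤ W} =
      Set.range (fun H : {H : Submodule K W // finrank K H = 1} => H.1.map W.subtype) := by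
    ext p
    constructor
    · rintro ⟨hp, hpW⟩
      refine ⟨⟨p.comap W.subtype, ?_⟩, ?_⟩
      · rwa [← Submodule.finrank_map_subtype_eq, Submodule.map_comap_subtype,
          inf_of_le_right hpW]
      · simp [Submodule.map_comap_subtype, inf_of_le_right hpW]
    · rintro ⟨⟨H, hH⟩, rfl⟩
      exact ⟨(Submodule.finrank_map_subtype_eq W H).trans hH, Submodule.map_subtype_le W H⟩
  have hinj : Function.Injective
      (fun H : {H : Submodule K W // finrank K H = 1} => H.1.map W.subtype) :=
    fun H H' h => Subtype.ext (Submodule.map_injective_of_injective W.injective_subtype h)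
  rw [hrange, Set.ncard_range_of_injective hinj,
    ← Nat.card_congr (Projectivization.equivSubmodule K W),
    Projectivization.card_of_finrank K W rfl]

theorem finrank_inf_add_one_of_not_le [FiniteDimensional K V] {W H : Submodule K V}
    (hH : finrank K H + 1 = finrank K V) (hWH : ¬ W ≤ H) :
    finrank K ↥(W ⊓ H) + 1 = finrank K W := by
  have hlt : finrank K H < finrank K ↥(W ⊔ H) :=
    Submodule.finrank_lt_finrank_of_lt (right_lt_sup.mpr hWH)
  have hle := Submodule.finrank_le (W ⊔ H)
  have := Submodule.finrank_sup_add_finrank_inf_eq W H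
  omega

end Counting

section Incidence

variable {K : Type} [Field K] [Fintype K]

theorem ncard_points_le (W : Submodule K (Fin 4 → K)) :
    {p | p ∈ pgPoint K ∧ p ≤ W}.ncard = ∑ i ∈ range (finrank K W), Nat.card K ^ i :=
  ncard_finrank_eq_one_le W

theorem ncard_points_le_of_mem_pgPlane {π : Submodule K (Fin 4 → K)} (hπ : π ∈ pgPlane K) :
    {p | p ∈ pgPoint K ∧ p ≤ π}.ncard = Nat.card K ^ 2 + Nat.card K + 1 := by
  rw [ncard_points_le, show finrank K π = 3 from hπ]
  simp only [sum_range_succ, sum_range_zero]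
  ring

theorem ncard_points_le_of_mem_pgLine {l : Submodule K (Fin 4 → K)} (hl : l ∈ pgLine K) :
    {p | p ∈ pgPoint K ∧ p ≤ l}.ncard = Nat.card K + 1 := by
  rw [ncard_points_le, show finrank K l = 2 from hl]
  simp [sum_range_succ, add_comm]

theorem ncard_points_le_inf_of_not_le {l π : Submodule K (Fin 4 → K)} (hl : l ∈ pgLine K)
    (hπ : π ∈ pgPlane K) (hlπ : ¬ l ≤ π) :
    {p | p ∈ pgPoint K ∧ p ≤ l ⊓ π}.ncard = 1 := by
  have h := finrank_inf_add_one_of_not_le (W := l) (H := π)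
    (by rw [show finrank K π = 3 from hπ, finrank_fin_fun]) hlπ
  rw [show finrank K l = 2 from hl] at h
  rw [ncard_points_le, show finrank K ↥(l ⊓ π) = 1 by omega]
  simp

open scoped Classical in
theorem sum_ncard_linesThru (S : Set (Submodule K (Fin 4 → K))) (hS : S ⊆ pgLine K)
    {π : Submodule K (Fin 4 → K)} (hπ : π ∈ pgPlane K) :
    ∑ p with p ∈ pgPoint K ∧ p ≤ π, (linesThru K S p).ncard =
      S.ncard + Nat.card K * (linesIn K S π).ncard := by
  have hpoints : ∀ l ∈ S, #{p | (p ∈ pgPoint K ∧ p ≤ π) ∧ p ≤ l} =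
      if l ≤ π then Nat.card K + 1 else 1 := by
    intro l hl
    have hinf : #{p | (p ∈ pgPoint K ∧ p ≤ π) ∧ p ≤ l} =
        {p | p ∈ pgPoint K ∧ p ≤ l ⊓ π}.ncard :=
      (ncard_eq_card_filter fun p => by simp only [Set.mem_ofPred_eq, le_inf_iff]; tauto).symm
    split_ifs with hlπ
    · rw [hinf, inf_of_le_left hlπ, ncard_points_le_of_mem_pgLine (hS hl)]
    · rw [hinf, ncard_points_le_inf_of_not_le (hS hl) hπ hlπ]
  have hsplit := card_filter_add_card_filter_not (s := {l | l ∈ S}) (p := (· ≤ π))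
  rw [filter_filter, filter_filter] at hsplit
  calc ∑ p with p ∈ pgPoint K ∧ p ≤ π, (linesThru K S p).ncard
      = ∑ p with p ∈ pgPoint K ∧ p ≤ π, #{l | l ∈ S ∧ p ≤ l} :=
        sum_congr rfl fun p _ => ncard_eq_card_filter fun _ => Iff.rfl
    _ = ∑ l with l ∈ S, #{p | (p ∈ pgPoint K ∧ p ≤ π) ∧ p ≤ l} := by
        simpa only [bipartiteAbove, bipartiteBelow, filter_filter] using
          sum_card_bipartiteAbove_eq_sum_card_bipartiteBelow (r := (· ≤ ·))
            (s := {p | p ∈ pgPoint K ∧ p ≤ π}) (t := {l | l ∈ S})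
    _ = ∑ l with l ∈ S, if l ≤ π then Nat.card K + 1 else 1 :=
        sum_congr rfl fun l hl => hpoints l (mem_filter.mp hl).2
    _ = #{l | l ∈ S} + Nat.card K * #{l | l ∈ S ∧ l ≤ π} := by
        rw [sum_ite, sum_const, sum_const, filter_filter, filter_filter, smul_eq_mul, smul_eq_mul,
          ← hsplit]
        ring
    _ = S.ncard + Nat.card K * (linesIn K S π).ncard := by
        rw [ncard_eq_card_filter (P := (· ∈ S)) fun _ => Iff.rfl,
          ncard_eq_card_filter (s := linesIn K S π) (P := fun l => l ∈ S ∧ l ≤ π)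
          fun _ => Iff.rfl]

end Incidence

section BlackPoints

variable {K : Type} [Field K] [Fintype K] {q : ℕ} {S : Set (Submodule K (Fin 4 → K))}
  {σ : Submodule K (Fin 4 → K)}

theorem ncard_black_add_ncard_nonblack :
    {p | IsBlack K S q p ∧ p ≤ σ}.ncard + {p | p ∈ pgPoint K ∧ p ≤ σ ∧ ¬ IsBlack K S q p}.ncard =
      {p | p ∈ pgPoint K ∧ p ≤ σ}.ncard := by
  rw [← Set.ncard_inter_add_ncard_sdiff_eq_ncard {p | p ∈ pgPoint K ∧ p ≤ σ}
    {p | IsBlack K S q p}]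
  congr 1 <;> congr 1 <;> ext p <;>
    simp only [IsBlack, Set.mem_inter_iff, Set.mem_sdiff, Set.mem_ofPred_eq] <;> tauto

theorem ncard_black_mul_add_ncard_nonblack_mul (hq : Nat.card K = q) (hS : S ⊆ pgLine K)
    (h1 : P1 K S q) (hσ : σ ∈ pgPlane K) :
    {p | IsBlack K S q p ∧ p ≤ σ}.ncard * q ^ 2 +
        {p | p ∈ pgPoint K ∧ p ≤ σ ∧ ¬ IsBlack K S q p}.ncard * (q * (q + 1) / 2) =
      S.ncard + q * (linesIn K S σ).ncard := by
  classical
  rw [← hq, ← sum_ncard_linesThru S hS hσ, ← sum_filter_add_sum_filter_not _ (IsBlack K S q),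
    filter_filter, filter_filter, hq]
  have hblack : ∀ p ∈ ({p | (p ∈ pgPoint K ∧ p ≤ σ) ∧ IsBlack K S q p} : Finset _),
      (linesThru K S p).ncard = q ^ 2 := fun p hp => (mem_filter.mp hp).2.2.2
  have hnonblack : ∀ p ∈ ({p | (p ∈ pgPoint K ∧ p ≤ σ) ∧ ¬ IsBlack K S q p} : Finset _),
      (linesThru K S p).ncard = q * (q + 1) / 2 := by
    intro p hp
    obtain ⟨-, ⟨hp, -⟩, hnb⟩ := mem_filter.mp hp
    exact (h1.1 p hp).resolve_right fun h => hnb ⟨hp, h⟩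
  rw [sum_congr rfl hblack, sum_congr rfl hnonblack, sum_const, sum_const, smul_eq_mul,
    smul_eq_mul]
  congr 2 <;> exact ncard_eq_card_filter fun p => by simp only [IsBlack, Set.mem_ofPred_eq]; tauto

end BlackPoints

theorem stmt_16_general (K : Type) [Field K] [Fintype K] (q : ℕ) (hq : Fintype.card K = q)
    (S : Set (Submodule K (Fin 4 → K))) (hS : S ⊆ pgLine K)
    (h1 : P1 K S q) :
    ∀ π π', IsTangent K S q π → IsSecant K S q π' →
      {p | IsBlack K S q p ∧ p ≤ π}.ncard =
        {p | IsBlack K S q p ∧ p ≤ π'}.ncard + q := by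
  rintro π π' ⟨hπ, hSπ⟩ ⟨hπ', hSπ'⟩
  have hq' : Nat.card K = q := Nat.card_eq_fintype_card.trans hq
  have hq2 : 2 ≤ q := hq ▸ Fintype.one_lt_card
  have hcount := ncard_black_mul_add_ncard_nonblack_mul hq' hS h1 hπ
  have hcount' := ncard_black_mul_add_ncard_nonblack_mul hq' hS h1 hπ'
  rw [hSπ] at hcount
  rw [hSπ'] at hcount'
  have hpoints := (ncard_black_add_ncard_nonblack (S := S) (q := q)).trans
    ((ncard_points_le_of_mem_pgPlane hπ).trans (ncard_points_le_of_mem_pgPlane hπ').symm)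
  rw [← ncard_black_add_ncard_nonblack] at hpoints
  have hm : 2 * (q * (q + 1) / 2) = q * (q + 1) :=
    Nat.mul_div_cancel' (Nat.even_mul_succ_self q).two_dvd
  set m := q * (q + 1) / 2
  set b := {p | IsBlack K S q p ∧ p ≤ π}.ncard
  set b' := {p | IsBlack K S q p ∧ p ≤ π'}.ncard
  zify at hcount hcount' hpoints hm hq2
  have key : ((b : ℤ) - b' - q) * (q * (q - 1)) = 0 := by
    linear_combination
      2 * hcount - 2 * hcount' - 2 * (m : ℤ) * hpoints + ((b : ℤ) - b' - q) * hm
  have hb := (mul_eq_zero.mp key).resolve_right (mul_ne_zero (by omega) (by omega))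
  omega

/-- If `π` is a tangent plane and `π'` a secant plane, then the
number of black points in `π` equals the number of black points in `π'`
plus `q`. -/
theorem stmt_16 (K : Type) [Field K] [Fintype K] (q : ℕ) (hq : Fintype.card K = q)
    (hq_odd : Odd q) (S : Set (Submodule K (Fin 4 → K))) (hS : S ⊆ pgLine K)
    (h1 : P1 K S q) (h2 : P2 K S q) (h2a : P2a K S q) (h2b : P2b K S q) :
    ∀ π π', IsTangent K S q π → IsSecant K S q π' →
      {p | IsBlack K S q p ∧ p ≤ π}.ncard =
        {p | IsBlack K S q p ∧ p ≤ π'}.ncard + q :=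
  stmt_16_general K q hq S hS h1
end

section
/- (i) Every line of PG(3,q) contains exactly 0, 1, 2 or q+1 black points. (ii) If a line of PG(3,q) contains exactly two black points, then it is a line of S. -/
open Submodule Set

/-!
Write `c(l) = q` if `l ∈ S` and `c(l) = 0` otherwise. Sorting the lines of `S` through the
points of a line `l` by the plane they span with `l` gives two double-counting identities: for a
plane `π ⊇ l`, `∑_{p ∈ l} |pencil(p, π)| = |S_π| + c(l)`, and for a point `x ∈ l`,
`∑_{π ⊇ l} |pencil(x, π)| = |S_x| + c(l)`; together, `∑_{p ∈ l} |S_p| = ∑_{π ⊇ l} |S_π|`.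

Pencils contain at most `q` lines of `S`, so the second identity applied to a black point `x` on
a line of `S` forces full pencils of `q` lines at `x` in every plane through that line; in
particular a black point has a full pencil in every secant plane through it. In a secant plane
`π ⊇ l` every other point of `l` still has at least `(q-1)/2` lines of `S_π`, and the first
identity then leaves room for at most one black point on `l` if `l ∉ S`, and at most two if
`l ∈ S`. If `l` carries more black points, every plane through `l` is tangent, so
`∑_{p ∈ l} |S_p| = (q+1)q²`; as `|S_p| ≤ q²` for every point, all `q+1` points of `l` are black.
-/

open Module

section Subspaces

variable {K V : Type*} [Field K] [AddCommGroup V] [Module K V]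

theorem ncard_setOf_finrank_eq_one [Finite K] (h : finrank K V = 2) :
    {p : Submodule K V | finrank K p = 1}.ncard = Nat.card K + 1 := by
  rw [← Nat.card_coe_set_eq, ← Projectivization.card_of_finrank_two K V h]
  exact Nat.card_congr (Projectivization.equivSubmodule K V).symm

theorem ncard_setOf_finrank_eq_one_le [Finite K] {W : Submodule K V} (hW : finrank K W = 2) :
    {p : Submodule K V | finrank K p = 1 ∧ p ≤ W}.ncard = Nat.card K + 1 := by
  have himage : (map W.subtype) '' {P : Submodule K W | finrank K P = 1} =
      {p : Submodule K V | finrank K p = 1 ∧ p ≤ W} := by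
    ext p
    constructor
    · rintro ⟨P, hP, rfl⟩
      exact ⟨(finrank_map_subtype_eq W P).trans hP, map_subtype_le W P⟩
    · rintro ⟨hp, hpW⟩
      have hmap : (p.comap W.subtype).map W.subtype = p := by
        rw [map_comap_subtype, inf_eq_right.2 hpW]
      refine ⟨p.comap W.subtype, ?_, hmap⟩
      rw [Set.mem_ofPred_eq, ← finrank_map_subtype_eq, hmap, hp]
  rw [← himage, Set.ncard_image_of_injective _ (map_injective_of_injective W.injective_subtype),
    ncard_setOf_finrank_eq_one hW]

theorem finrank_comap_mkQ [FiniteDimensional K V] (l : Submodule K V) (W : Submodule K (V ⧸ l)) :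
    finrank K (W.comap l.mkQ) = finrank K W + finrank K l := by
  have hrank := LinearMap.finrank_range_add_finrank_ker (l.mkQ.domRestrict (W.comap l.mkQ))
  rwa [LinearMap.range_domRestrict, map_comap_eq_self (by simp), LinearMap.ker_domRestrict,
    ker_mkQ, (comapSubtypeEquivOfLe (le_comap_mkQ l W)).finrank_eq, eq_comm] at hrank

theorem ncard_setOf_finrank_eq_succ_ge [Finite K] [FiniteDimensional K V] {n : ℕ}
    (hV : finrank K V = n + 2) {l : Submodule K V} (hl : finrank K l = n) :
    {π : Submodule K V | finrank K π = n + 1 ∧ l ≤ π}.ncard = Nat.card K + 1 := by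
  have hquot : finrank K (V ⧸ l) = 2 := by
    have := l.finrank_quotient_add_finrank
    omega
  have himage : (comap l.mkQ) '' {W : Submodule K (V ⧸ l) | finrank K W = 1} =
      {π : Submodule K V | finrank K π = n + 1 ∧ l ≤ π} := by
    ext π
    constructor
    · rintro ⟨W, hW, rfl⟩
      exact ⟨by rw [finrank_comap_mkQ, hW, hl, add_comm], le_comap_mkQ l W⟩
    · rintro ⟨hπ, hlπ⟩
      have hcomap : (π.map l.mkQ).comap l.mkQ = π := by
        rw [comap_map_mkQ, sup_eq_right.2 hlπ]
      refine ⟨π.map l.mkQ, ?_, hcomap⟩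
      have := finrank_comap_mkQ l (π.map l.mkQ)
      rw [hcomap, hπ, hl] at this
      exact Nat.add_right_cancel (this.symm.trans (add_comm n 1))
  rw [← himage, Set.ncard_image_of_injective _ (comap_injective_of_surjective l.mkQ_surjective),
    ncard_setOf_finrank_eq_one hquot]

theorem setOf_finrank_eq_and_le_eq_singleton [FiniteDimensional K V] {U : Submodule K V} {n : ℕ}
    (hU : finrank K U = n) : {W : Submodule K V | finrank K W = n ∧ W ≤ U} = {U} := by
  ext W
  refine ⟨fun ⟨hW, hWU⟩ ↦ eq_of_le_of_finrank_eq hWU (hW.trans hU.symm), ?_⟩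
  rintro rfl
  exact ⟨hU, le_rfl⟩

theorem setOf_finrank_eq_and_ge_eq_singleton [FiniteDimensional K V] {U : Submodule K V} {n : ℕ}
    (hU : finrank K U = n) : {W : Submodule K V | finrank K W = n ∧ U ≤ W} = {U} := by
  ext W
  refine ⟨fun ⟨hW, hUW⟩ ↦ (eq_of_le_of_finrank_eq hUW (hU.trans hW.symm)).symm, ?_⟩
  rintro rfl
  exact ⟨hU, le_rfl⟩

theorem finrank_inf_lt_of_ne [FiniteDimensional K V] {l m : Submodule K V} (hlm : l ≠ m)
    (h : finrank K l = finrank K m) : finrank K ↥(l ⊓ m) < finrank K l := by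
  refine finrank_lt_finrank_of_lt (lt_of_le_of_ne inf_le_left fun heq ↦ hlm ?_)
  exact eq_of_le_of_finrank_eq (heq ▸ inf_le_right) h

theorem finrank_inf_eq_one_of_le [FiniteDimensional K V] {l m π : Submodule K V}
    (hl : finrank K l = 2) (hm : finrank K m = 2) (hπ : finrank K π = 3) (hlm : l ≠ m)
    (hlπ : l ≤ π) (hmπ : m ≤ π) : finrank K ↥(l ⊓ m) = 1 := by
  have hsup : finrank K ↥(l ⊔ m) ≤ 3 := (finrank_mono (sup_le hlπ hmπ)).trans hπ.le
  have := finrank_sup_add_finrank_inf_eq l m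
  have := finrank_inf_lt_of_ne hlm (hl.trans hm.symm)
  omega

theorem finrank_sup_eq_three_of_ge [FiniteDimensional K V] {x l m : Submodule K V}
    (hx : finrank K x = 1) (hl : finrank K l = 2) (hm : finrank K m = 2) (hlm : l ≠ m)
    (hxl : x ≤ l) (hxm : x ≤ m) : finrank K ↥(l ⊔ m) = 3 := by
  have hinf : 1 ≤ finrank K ↥(l ⊓ m) := hx.symm.le.trans (finrank_mono (le_inf hxl hxm))
  have := finrank_sup_add_finrank_inf_eq l m
  have := finrank_inf_lt_of_ne hlm (hl.trans hm.symm)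
  omega

end Subspaces

open Classical in
theorem Finset.sum_ncard_sep_eq_ncard_add {α β : Type*} (P : Finset α) {M : Set β}
    (hM : M.Finite) (r : α → β → Prop) (l : β) (c : ℕ)
    (h : ∀ m ∈ M, {a | a ∈ P ∧ r a m}.ncard = if m = l then c + 1 else 1) :
    ∑ a ∈ P, {m | m ∈ M ∧ r a m}.ncard = M.ncard + if l ∈ M then c else 0 := by
  have hcoe : ∀ a, {m | m ∈ M ∧ r a m} = ↑(hM.toFinset.bipartiteAbove r a) := fun a ↦ by
    ext; simp
  have hcoe' : ∀ m, {a | a ∈ P ∧ r a m} = ↑(P.bipartiteBelow r m) := fun m ↦ by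
    ext; simp
  simp_rw [hcoe, Set.ncard_coe_finset, sum_card_bipartiteAbove_eq_sum_card_bipartiteBelow]
  calc ∑ m ∈ hM.toFinset, (P.bipartiteBelow r m).card
      = ∑ m ∈ hM.toFinset, (1 + if m = l then c else 0) := by
        refine sum_congr rfl fun m hm ↦ ?_
        rw [← Set.ncard_coe_finset, ← hcoe', h m (by simpa using hm)]
        split_ifs <;> omega
    _ = M.ncard + if l ∈ M then c else 0 := by
        rw [sum_add_distrib, sum_ite_eq', Set.ncard_eq_toFinset_card M hM]
        simp

section ProjectiveSpace

variable {K : Type} [Field K] [Finite K]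

noncomputable def pointsOn (l : Submodule K (Fin 4 → K)) : Finset (Submodule K (Fin 4 → K)) :=
  (Set.toFinite {p | p ∈ pgPoint K ∧ p ≤ l}).toFinset

noncomputable def planesThrough (l : Submodule K (Fin 4 → K)) :
    Finset (Submodule K (Fin 4 → K)) :=
  (Set.toFinite {π | π ∈ pgPlane K ∧ l ≤ π}).toFinset

@[simp]
theorem mem_pointsOn {l p : Submodule K (Fin 4 → K)} :
    p ∈ pointsOn l ↔ p ∈ pgPoint K ∧ p ≤ l := by
  simp [pointsOn]

@[simp]
theorem mem_planesThrough {l π : Submodule K (Fin 4 → K)} :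
    π ∈ planesThrough l ↔ π ∈ pgPlane K ∧ l ≤ π := by
  simp [planesThrough]

theorem card_pointsOn {l : Submodule K (Fin 4 → K)} (hl : l ∈ pgLine K) :
    (pointsOn l).card = Nat.card K + 1 := by
  rw [pointsOn, ← Set.ncard_eq_toFinset_card]
  exact ncard_setOf_finrank_eq_one_le hl

theorem card_planesThrough {l : Submodule K (Fin 4 → K)} (hl : l ∈ pgLine K) :
    (planesThrough l).card = Nat.card K + 1 := by
  rw [planesThrough, ← Set.ncard_eq_toFinset_card]
  exact ncard_setOf_finrank_eq_succ_ge (finrank_fin_fun K) hl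

variable {S : Set (Submodule K (Fin 4 → K))}

open Classical in
theorem sum_ncard_pencilS_pointsOn (hS : S ⊆ pgLine K) {l π : Submodule K (Fin 4 → K)}
    (hl : l ∈ pgLine K) (hπ : π ∈ pgPlane K) (hlπ : l ≤ π) :
    ∑ p ∈ pointsOn l, (pencilS K S p π).ncard =
      (linesIn K S π).ncard + if l ∈ S then Nat.card K else 0 := by
  have hpencil : ∀ p, pencilS K S p π = {m | m ∈ linesIn K S π ∧ p ≤ m} := fun p ↦ by
    ext; simp only [pencilS, linesIn, Set.mem_ofPred_eq]; tauto
  have hlS : l ∈ linesIn K S π ↔ l ∈ S := by simp [linesIn, hlπ]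
  simp only [hpencil, ← hlS]
  refine Finset.sum_ncard_sep_eq_ncard_add _ (Set.toFinite _) _ l _ fun m hm ↦ ?_
  split_ifs with hml
  · subst hml
    simp only [mem_pointsOn, and_assoc, and_self]
    exact ncard_setOf_finrank_eq_one_le hl
  · have hpts : {p | p ∈ pointsOn l ∧ p ≤ m} = {p : Submodule K (Fin 4 → K) | finrank K p = 1 ∧ p ≤ l ⊓ m} := by
      ext; simp [pgPoint, and_assoc]
    rw [hpts, setOf_finrank_eq_and_le_eq_singleton
      (finrank_inf_eq_one_of_le hl (hS hm.1) hπ (Ne.symm hml) hlπ hm.2), Set.ncard_singleton]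

open Classical in
theorem sum_ncard_pencilS_planesThrough (hS : S ⊆ pgLine K) {x l : Submodule K (Fin 4 → K)}
    (hx : x ∈ pgPoint K) (hl : l ∈ pgLine K) (hxl : x ≤ l) :
    ∑ π ∈ planesThrough l, (pencilS K S x π).ncard =
      (linesThru K S x).ncard + if l ∈ S then Nat.card K else 0 := by
  have hpencil : ∀ π, pencilS K S x π = {m | m ∈ linesThru K S x ∧ m ≤ π} := fun π ↦ by
    ext; simp only [pencilS, linesThru, Set.mem_ofPred_eq]; tauto
  have hlS : l ∈ linesThru K S x ↔ l ∈ S := by simp [linesThru, hxl]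
  simp only [hpencil, ← hlS]
  refine Finset.sum_ncard_sep_eq_ncard_add _ (Set.toFinite _) _ l _ fun m hm ↦ ?_
  split_ifs with hml
  · subst hml
    simp only [mem_planesThrough, and_assoc, and_self]
    exact ncard_setOf_finrank_eq_succ_ge (finrank_fin_fun K) hl
  · have hpls : {π | π ∈ planesThrough l ∧ m ≤ π} = {π : Submodule K (Fin 4 → K) | finrank K π = 3 ∧ l ⊔ m ≤ π} := by
      ext; simp [pgPlane, and_assoc]
    rw [hpls, setOf_finrank_eq_and_ge_eq_singleton
      (finrank_sup_eq_three_of_ge hx hl (hS hm.1) (Ne.symm hml) hxl hm.2), Set.ncard_singleton]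

theorem sum_ncard_linesThru_eq_sum_ncard_linesIn (hS : S ⊆ pgLine K)
    {l : Submodule K (Fin 4 → K)} (hl : l ∈ pgLine K) :
    ∑ p ∈ pointsOn l, (linesThru K S p).ncard = ∑ π ∈ planesThrough l, (linesIn K S π).ncard := by
  classical
  set c := if l ∈ S then Nat.card K else 0
  have hcard : (pointsOn l).card = (planesThrough l).card := by
    rw [card_pointsOn hl, card_planesThrough hl]
  refine Nat.add_right_cancel (m := (pointsOn l).card * c) ?_
  calc ∑ p ∈ pointsOn l, (linesThru K S p).ncard + (pointsOn l).card * c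
      = ∑ p ∈ pointsOn l, ∑ π ∈ planesThrough l, (pencilS K S p π).ncard := by
        rw [← smul_eq_mul, ← Finset.sum_const, ← Finset.sum_add_distrib]
        refine Finset.sum_congr rfl fun p hp ↦ ?_
        rw [mem_pointsOn] at hp
        exact (sum_ncard_pencilS_planesThrough hS hp.1 hl hp.2).symm
    _ = ∑ π ∈ planesThrough l, ∑ p ∈ pointsOn l, (pencilS K S p π).ncard := Finset.sum_comm
    _ = ∑ π ∈ planesThrough l, (linesIn K S π).ncard + (pointsOn l).card * c := by
        rw [hcard, ← smul_eq_mul, ← Finset.sum_const, ← Finset.sum_add_distrib]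
        refine Finset.sum_congr rfl fun π hπ ↦ ?_
        rw [mem_planesThrough] at hπ
        exact sum_ncard_pencilS_pointsOn hS hl hπ.1 hπ.2

end ProjectiveSpace

section BlackPoints

variable {K : Type} [Field K] {S : Set (Submodule K (Fin 4 → K))} {q : ℕ}

theorem ncard_pencilS_le (h2 : P2 K S q) (h2a : P2a K S q) (h2b : P2b K S q) (hq : 1 ≤ q)
    {p π : Submodule K (Fin 4 → K)} (hπ : π ∈ pgPlane K) (hp : p ∈ pgPoint K) (hpπ : p ≤ π) :
    (pencilS K S p π).ncard ≤ q := by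
  rcases h2 π hπ with hsec | htan
  · rcases h2b π hπ hsec p hp hpπ with h | h | h <;> omega
  · rcases h2a π hπ htan p hp hpπ with h | h <;> omega

variable [Finite K]

theorem three_le_of_card_eq_of_odd (hq : Nat.card K = q) (hq_odd : Odd q) : 3 ≤ q := by
  have := Finite.one_lt_card (α := K)
  obtain ⟨k, rfl⟩ := hq_odd
  omega

theorem ncard_pencilS_eq_of_isBlack_of_mem (hq : Nat.card K = q) (hS : S ⊆ pgLine K)
    (h2 : P2 K S q) (h2a : P2a K S q) (h2b : P2b K S q) {x m π : Submodule K (Fin 4 → K)}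
    (hx : IsBlack K S q x) (hm : m ∈ S) (hxm : x ≤ m) (hπ : π ∈ pgPlane K) (hmπ : m ≤ π) :
    (pencilS K S x π).ncard = q := by
  have hle : ∀ σ ∈ planesThrough m, (pencilS K S x σ).ncard ≤ q := fun σ hσ ↦
    ncard_pencilS_le h2 h2a h2b (hq ▸ Finite.one_lt_card.le) (mem_planesThrough.1 hσ).1 hx.1
      (hxm.trans (mem_planesThrough.1 hσ).2)
  have hsum : ∑ σ ∈ planesThrough m, (pencilS K S x σ).ncard = ∑ σ ∈ planesThrough m, q := by
    rw [sum_ncard_pencilS_planesThrough hS hx.1 (hS hm) hxm, if_pos hm, hx.2, Finset.sum_const,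
      card_planesThrough (hS hm), hq, smul_eq_mul]
    ring
  exact (Finset.sum_eq_sum_iff_of_le hle).1 hsum π (mem_planesThrough.2 ⟨hπ, hmπ⟩)

theorem ncard_pencilS_eq_of_isBlack_of_isSecant (hq : Nat.card K = q) (hq_odd : Odd q)
    (hS : S ⊆ pgLine K) (h2 : P2 K S q) (h2a : P2a K S q) (h2b : P2b K S q)
    {x π : Submodule K (Fin 4 → K)} (hx : IsBlack K S q x) (hπ : IsSecant K S q π)
    (hxπ : x ≤ π) : (pencilS K S x π).ncard = q := by
  have hq3 := three_le_of_card_eq_of_odd hq hq_odd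
  have hne : (pencilS K S x π).ncard ≠ 0 := by
    rcases h2b π hπ.1 hπ.2 x hx.1 hxπ with h | h | h <;> omega
  obtain ⟨m, hmS, hxm, hmπ⟩ := Set.nonempty_of_ncard_ne_zero hne
  exact ncard_pencilS_eq_of_isBlack_of_mem hq hS h2 h2a h2b hx hmS hxm hπ.1 hmπ

open Classical in
theorem ncard_isBlack_eq_card_filter (l : Submodule K (Fin 4 → K)) :
    {p | IsBlack K S q p ∧ p ≤ l}.ncard = ((pointsOn l).filter (IsBlack K S q)).card := by
  rw [← Set.ncard_coe_finset]
  congr 1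
  ext p
  simp only [IsBlack, Set.mem_ofPred_eq, Finset.coe_filter, mem_pointsOn]
  tauto

open Classical in
theorem ncard_isBlack_le_of_isSecant (hq : Nat.card K = q) (hq_odd : Odd q)
    (hS : S ⊆ pgLine K) (h2 : P2 K S q) (h2a : P2a K S q) (h2b : P2b K S q)
    {l π : Submodule K (Fin 4 → K)} (hl : l ∈ pgLine K) (hπ : IsSecant K S q π) (hlπ : l ≤ π) :
    {p | IsBlack K S q p ∧ p ≤ l}.ncard ≤ if l ∈ S then 2 else 1 := by
  have hq3 := three_le_of_card_eq_of_odd hq hq_odd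
  obtain ⟨k, rfl⟩ := hq_odd
  set B := (pointsOn l).filter (IsBlack K S (2 * k + 1))
  set W := (pointsOn l).filter fun p ↦ ¬IsBlack K S (2 * k + 1) p
  have hB : ∑ p ∈ B, (pencilS K S p π).ncard = B.card * (2 * k + 1) :=
    Finset.sum_const_nat fun p hp ↦ by
      obtain ⟨hp, hpB⟩ := Finset.mem_filter.1 hp
      exact ncard_pencilS_eq_of_isBlack_of_isSecant hq ⟨k, rfl⟩ hS h2 h2a h2b hpB hπ
        ((mem_pointsOn.1 hp).2.trans hlπ)
  have hW : W.card * k ≤ ∑ p ∈ W, (pencilS K S p π).ncard := by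
    simpa using Finset.card_nsmul_le_sum W _ k fun p hp ↦ by
      have hp := mem_pointsOn.1 (Finset.mem_filter.1 hp).1
      rcases h2b π hπ.1 hπ.2 p hp.1 (hp.2.trans hlπ) with h | h | h <;> omega
  have hcard : B.card + W.card = 2 * k + 2 := by
    rw [Finset.card_filter_add_card_filter_not, card_pointsOn hl, hq]
  have hsum := sum_ncard_pencilS_pointsOn (S := S) hS hl hπ.1 hlπ
  rw [← Finset.sum_filter_add_sum_filter_not _ (IsBlack K S (2 * k + 1)), hB, hπ.2, hq] at hsum
  have hhalf : (2 * k + 1) * (2 * k + 1 + 1) / 2 = (2 * k + 1) * (k + 1) := by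
    rw [show (2 * k + 1) * (2 * k + 1 + 1) = (2 * k + 1) * (k + 1) * 2 by ring]
    simp
  rw [hhalf] at hsum
  rw [ncard_isBlack_eq_card_filter]
  split_ifs at hsum ⊢ <;> nlinarith

theorem ncard_isBlack_eq_of_forall_tangent (hq : Nat.card K = q) (hS : S ⊆ pgLine K)
    (h1 : P1 K S q) {l : Submodule K (Fin 4 → K)} (hl : l ∈ pgLine K)
    (htan : ∀ π ∈ planesThrough l, (linesIn K S π).ncard = q ^ 2) :
    {p | IsBlack K S q p ∧ p ≤ l}.ncard = q + 1 := by
  classical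
  have hle : ∀ p ∈ pointsOn l, (linesThru K S p).ncard ≤ q ^ 2 := fun p hp ↦ by
    rcases h1.1 p (mem_pointsOn.1 hp).1 with h | h
    · exact h ▸ Nat.div_le_of_le_mul (by nlinarith)
    · exact h.le
  have hsum : ∑ p ∈ pointsOn l, (linesThru K S p).ncard = ∑ p ∈ pointsOn l, q ^ 2 := by
    rw [sum_ncard_linesThru_eq_sum_ncard_linesIn hS hl, Finset.sum_congr rfl htan,
      Finset.sum_const, Finset.sum_const, card_pointsOn hl, card_planesThrough hl]
  have hall := (Finset.sum_eq_sum_iff_of_le hle).1 hsum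
  rw [ncard_isBlack_eq_card_filter, Finset.filter_true_of_mem fun p hp ↦
    ⟨(mem_pointsOn.1 hp).1, hall p hp⟩, card_pointsOn hl, hq]

open Classical in
theorem ncard_isBlack_eq_of_lt (hq : Nat.card K = q) (hq_odd : Odd q) (hS : S ⊆ pgLine K)
    (h1 : P1 K S q) (h2 : P2 K S q) (h2a : P2a K S q) (h2b : P2b K S q)
    {l : Submodule K (Fin 4 → K)} (hl : l ∈ pgLine K)
    (hlt : (if l ∈ S then 2 else 1) < {p | IsBlack K S q p ∧ p ≤ l}.ncard) :
    {p | IsBlack K S q p ∧ p ≤ l}.ncard = q + 1 := by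
  refine ncard_isBlack_eq_of_forall_tangent hq hS h1 hl fun π hπ ↦ ?_
  rw [mem_planesThrough] at hπ
  refine (h2 π hπ.1).resolve_left fun hsec ↦ ?_
  exact (ncard_isBlack_le_of_isSecant hq hq_odd hS h2 h2a h2b hl ⟨hπ.1, hsec⟩ hπ.2).not_gt hlt

end BlackPoints

/-- (i) every line of `PG(3,q)` contains `0`, `1`, `2` or `q+1`
black points; (ii) a line containing exactly two black points belongs to `S`. -/
theorem stmt_17 (K : Type) [Field K] [Fintype K] (q : ℕ) (hq : Fintype.card K = q)
    (hq_odd : Odd q) (S : Set (Submodule K (Fin 4 → K))) (hS : S ⊆ pgLine K)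
    (h1 : P1 K S q) (h2 : P2 K S q) (h2a : P2a K S q) (h2b : P2b K S q) :
    (∀ l ∈ pgLine K,
      {p | IsBlack K S q p ∧ p ≤ l}.ncard = 0 ∨
      {p | IsBlack K S q p ∧ p ≤ l}.ncard = 1 ∨
      {p | IsBlack K S q p ∧ p ≤ l}.ncard = 2 ∨
      {p | IsBlack K S q p ∧ p ≤ l}.ncard = q + 1) ∧
    (∀ l ∈ pgLine K, {p | IsBlack K S q p ∧ p ≤ l}.ncard = 2 → l ∈ S) := by
  have hq' : Nat.card K = q := Nat.card_eq_fintype_card.trans hq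
  have hq3 := three_le_of_card_eq_of_odd hq' hq_odd
  have hfull := fun l (hl : l ∈ pgLine K) ↦
    ncard_isBlack_eq_of_lt hq' hq_odd hS h1 h2 h2a h2b hl
  refine ⟨fun l hl ↦ ?_, fun l hl hl2 ↦ ?_⟩
  · by_cases hle : {p | IsBlack K S q p ∧ p ≤ l}.ncard ≤ 2
    · omega
    · exact Or.inr <| Or.inr <| Or.inr <| hfull l hl (by split_ifs <;> omega)
  · by_contra hlS
    have := hfull l hl (by rw [if_neg hlS, hl2]; norm_num)
    omega
end
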